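/- arXiv:2504.14484 — 5 statements merged into one kernel-verified Lean document; each statement's English description precedes it below -/
import Mathlib

section
/- Let F be a minimal spanning entering forest of V with k trees (F ∈ F̃^k), let s ∈ K_F be one of its roots, and put S = V(T^F_s), the vertex set of the tree of F rooted at s. Then μ°_S = λ°_S. -/
open scoped Classical

namespace BarrierForests

variable {α : Type*} [Fintype α] [DecidableEq α]

/-- Total weight of a set of arcs. -/
def aweight (v : α → α → ℝ) (A : Finset (α × α)) : ℝ := ∑ a ∈ A, v a.1 a.2

/-- Weight `Υ^A_S` of the arcs of `A` whose tail lies in `S`. -/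
def aweightOn (v : α → α → ℝ) (A : Finset (α × α)) (S : Finset α) : ℝ :=
  ∑ a ∈ A.filter (fun a => a.1 ∈ S), v a.1 a.2

/-- The relation "there is an arc from `i` to `j` in `A`". -/
def arcRel (A : Finset (α × α)) : α → α → Prop := fun i j => (i, j) ∈ A

/-- Entering forest: every vertex has out-degree at most one, and there are no
directed cycles. -/
def IsEForest (A : Finset (α × α)) : Prop :=
  (∀ i j j', (i, j) ∈ A → (i, j') ∈ A → j = j') ∧
  ∀ i, ¬ Relation.TransGen (arcRel A) i i

/-- Roots of a (spanning) entering forest: the vertices with no outgoing arc. -/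
noncomputable def rootSet (A : Finset (α × α)) : Finset α :=
  Finset.univ.filter fun i => ∀ j, (i, j) ∉ A

/-- `𝓕^k`: spanning entering forests of the digraph with arc set `E`
having exactly `k` trees (equivalently, `k` roots). -/
def FSet (E : Finset (α × α)) (k : ℕ) : Set (Finset (α × α)) :=
  {A | A ⊆ E ∧ IsEForest A ∧ (rootSet A).card = k}

/-- The infimum (in `EReal`, so `⊤` for the empty family) of the `w`-weights of the
members of `s`. -/
noncomputable def minW {β : Type*} (s : Set β) (w : β → ℝ) : EReal :=
  sInf ((fun x => (w x : EReal)) '' s)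

/-- `φ^k`: minimum weight of a spanning entering forest with `k` trees. -/
noncomputable def phi (v : α → α → ℝ) (E : Finset (α × α)) (k : ℕ) : EReal :=
  minW (FSet E k) (aweight v)

/-- `F ∈ 𝓕̃^k`: minimal spanning entering forest with `k` trees. -/
def IsMinForest (v : α → α → ℝ) (E : Finset (α × α)) (k : ℕ) (F : Finset (α × α)) : Prop :=
  F ∈ FSet E k ∧ (aweight v F : EReal) = phi v E k

/-- Vertex set of the tree `T^F_i` of the entering forest `F` rooted at `i`:
all vertices from which `i` is reachable. -/
noncomputable def treeVerts (F : Finset (α × α)) (i : α) : Finset α :=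
  Finset.univ.filter fun j => Relation.ReflTransGen (arcRel F) j i

/-- Arc set of the tree `T^F_i`. -/
noncomputable def treeArcs (F : Finset (α × α)) (i : α) : Finset (α × α) :=
  F.filter fun a => a.1 ∈ treeVerts F i

/-- Induced subgraph (restriction) of the arc set `A` on the vertex set `S`. -/
def restrictArcs (A : Finset (α × α)) (S : Finset α) : Finset (α × α) :=
  A.filter fun a => a.1 ∈ S ∧ a.2 ∈ S

/-- `T ∈ 𝓣^{•q}_S`: `T` is an entering tree that is a subgraph of the digraph with
arc set `E`, with vertex set `S` and root `q`. -/
def IsTreeOn (E T : Finset (α × α)) (S : Finset α) (q : α) : Prop :=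
  q ∈ S ∧ T ⊆ E ∧ (∀ a ∈ T, a.1 ∈ S ∧ a.2 ∈ S) ∧
  (∀ i ∈ S, i ≠ q → ∃! j, (i, j) ∈ T) ∧
  (∀ j, (q, j) ∉ T) ∧
  ∀ i ∈ S, Relation.ReflTransGen (arcRel T) i q

/-- `λ^{•q}_S`. -/
noncomputable def lamB (v : α → α → ℝ) (E : Finset (α × α)) (S : Finset α) (q : α) : EReal :=
  minW {T | IsTreeOn E T S q} (aweight v)

/-- `λ^•_S = min_{q ∈ S} λ^{•q}_S`. -/
noncomputable def lamBul (v : α → α → ℝ) (E : Finset (α × α)) (S : Finset α) : EReal :=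
  minW {T | ∃ q ∈ S, IsTreeOn E T S q} (aweight v)

/-- `T ∈ 𝓣^{∘q}_S`: `T` has `|S| + 1` vertices, `T|_S` is an entering tree with vertex
set `S` and root `q`, and the single arc of `T` leaving `S` goes from `q` to the root
`r ∉ S` of `T`. -/
def IsCTreeOn (E T : Finset (α × α)) (S : Finset α) (q : α) : Prop :=
  ∃ r, r ∉ S ∧ ∃ T', IsTreeOn E T' S q ∧ (q, r) ∈ E ∧ T = insert (q, r) T'

/-- `λ^{∘q}_S`. -/
noncomputable def lamC (v : α → α → ℝ) (E : Finset (α × α)) (S : Finset α) (q : α) : EReal :=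
  minW {T | IsCTreeOn E T S q} (aweight v)

/-- `λ^∘_S = min_{q ∈ S} λ^{∘q}_S`. -/
noncomputable def lamCirc (v : α → α → ℝ) (E : Finset (α × α)) (S : Finset α) : EReal :=
  minW {T | ∃ q ∈ S, IsCTreeOn E T S q} (aweight v)

/-- `μ^∘_S`: minimum of `Υ^F_S` over the spanning entering forests `F ∈ 𝓕^∘_S`,
i.e. those in which every vertex of `S` has an outgoing arc. -/
noncomputable def muCirc (v : α → α → ℝ) (E : Finset (α × α)) (S : Finset α) : EReal :=
  minW {A | A ⊆ E ∧ IsEForest A ∧ ∀ i ∈ S, ∃ j, (i, j) ∈ A} fun A => aweightOn v A S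

/-- `G ∈ 𝓡^F_y`: `G` is a descendant of `F` at the root `y`, i.e. `y` is a root of
`F`, the roots of `G` are those of `F` except `y`, `G` induces `T^F_q` on the vertex
set of every tree of `F` other than `T^F_y`, and `G` induces a tree on the vertex set
of `T^F_y`. -/
def IsDescendant (E F G : Finset (α × α)) (y : α) : Prop :=
  y ∈ rootSet F ∧ rootSet G = rootSet F \ {y} ∧
  (∀ q ∈ rootSet G, restrictArcs G (treeVerts F q) = treeArcs F q) ∧
  ∃ a ∈ treeVerts F y, IsTreeOn E (restrictArcs G (treeVerts F y)) (treeVerts F y) a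

/-- A potential graph: a connected weighted undirected graph with a loop at every
vertex.  Edges are recorded as a symmetric reflexive set of ordered pairs, with a
symmetric weight function `p`. -/
structure PotGraph (α : Type*) [Fintype α] [DecidableEq α] where
  p : α → α → ℝ
  edges : Finset (α × α)
  symm_mem : ∀ i j, (i, j) ∈ edges → (j, i) ∈ edges
  loop_mem : ∀ i, (i, i) ∈ edges
  symm_w : ∀ i j, p i j = p j i
  connected : ∀ i j : α, Relation.ReflTransGen (fun a b => (a, b) ∈ edges ∧ a ≠ b) i j

/-- Arc set of the barrier digraph of the potential graph `P`: an arc `(i,j)`, `i ≠ j`,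
for each non-loop edge of `P`. -/
def barcs (P : PotGraph α) : Finset (α × α) := P.edges.filter fun a => a.1 ≠ a.2

/-- Arc weights of the barrier digraph: `v i j = p i j - p i i`. -/
def bw (P : PotGraph α) : α → α → ℝ := fun i j => P.p i j - P.p i i

/-- Weight of a set of undirected edges of `P`. -/
noncomputable def uweight (P : PotGraph α) (T : Finset (Sym2 α)) : ℝ :=
  ∑ e ∈ T, Sym2.lift ⟨P.p, P.symm_w⟩ e

/-- `T ∈ 𝓣_S`: `T` is an undirected tree that is a subgraph of `P` (loops unused)
with vertex set `S`: its edges are non-loop edges of `P` joining vertices of `S`,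
it is connected on `S`, and it has `|S| - 1` edges. -/
def IsUTreeOn (P : PotGraph α) (T : Finset (Sym2 α)) (S : Finset α) : Prop :=
  (∀ e ∈ T, ∃ i j, i ≠ j ∧ e = s(i, j) ∧ (i, j) ∈ P.edges ∧ i ∈ S ∧ j ∈ S) ∧
  (∀ i ∈ S, ∀ j ∈ S, Relation.ReflTransGen (fun a b => s(a, b) ∈ T) i j) ∧
  T.card + 1 = S.card

/-- `ν_S`: minimum weight of an undirected tree on `S` that is a subgraph of `P`. -/
noncomputable def nu (P : PotGraph α) (S : Finset α) : EReal :=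
  minW {T | IsUTreeOn P T S} (uweight P)

/-- The underlying undirected edge set of a set of arcs. -/
def undir (A : Finset (α × α)) : Finset (Sym2 α) := A.image fun a => s(a.1, a.2)

/-- `Tq` is the entering tree (with root `q`, vertex set `S`, subgraph of the barrier
digraph of `P`) corresponding to the undirected tree `T`: it is obtained from `T` by
directing all edges toward `q` and replacing the weight of each arc `(i,j)` by
`v i j = p i j - p i i`. -/
def Corresponds (P : PotGraph α) (Tq : Finset (α × α)) (T : Finset (Sym2 α))
    (S : Finset α) (q : α) : Prop :=
  IsTreeOn (barcs P) Tq S q ∧ undir Tq = T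
end BarrierForests

/-!
`μ°_S ≤ λ°_S` holds for every `S`: a tree `T ∈ 𝓣^{∘q}_S` is itself a forest of `𝓕°_S`, and all
its arcs have their tail in `S`.

Conversely, let `A ∈ 𝓕°_S` with `S = V(T^F_s)`. Following `A` from `s` we leave `S` for the first
time along an arc `(q, r)`. Let `X` be the basin of `q`: the vertices of `S` from which `A` leads
to `q` without leaving `S`. Following `A` on `X` and `F` on `S \ X`, plus the arc `(q, r)`, gives
a tree of `𝓣^{∘q}_S`. Replacing the arcs of `F` leaving `S \ X` by those of `A` gives a forest
with the same roots as `F`, so minimality of `F` yields `Υ^F_{S \ X} ≤ Υ^A_{S \ X}`, and the tree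
weighs at most `Υ^A_S`.
-/

namespace Relation

variable {β : Type*} {r r' : β → β → Prop} {P : β → Prop} {a b : β}

theorem TransGen.mono_of_pred_closed (h : ∀ a b, r a b → P b → P a ∧ r' a b)
    (hab : TransGen r a b) (hb : P b) : TransGen r' a b := by
  induction hab with
  | single hab => exact .single (h _ _ hab hb).2
  | tail _ hcb ih =>
    obtain ⟨hc, hcb'⟩ := h _ _ hcb hb
    exact (ih hc).tail hcb'

theorem TransGen.mono_of_succ_closed (h : ∀ a b, r a b → P a → P b ∧ r' a b)
    (hab : TransGen r a b) (ha : P a) : TransGen r' a b := by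
  induction hab using TransGen.head_induction_on with
  | single hab => exact .single (h _ _ hab ha).2
  | head hac _ ih =>
    obtain ⟨hc, hac'⟩ := h _ _ hac ha
    exact (ih hc).head hac'

theorem not_transGen_self_of_reflTransGen_sink (hfun : ∀ a b c, r a b → r a c → b = c)
    {q : β} (hq : ∀ b, ¬ r q b) (haq : ReflTransGen r a q) : ¬ TransGen r a a := by
  induction haq using ReflTransGen.head_induction_on with
  | refl =>
    intro hqq
    obtain ⟨b, hqb, -⟩ := TransGen.head'_iff.mp hqq
    exact hq b hqb
  | head hac _ ih =>
    intro haa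
    obtain ⟨b, hab, hba⟩ := TransGen.head'_iff.mp haa
    obtain rfl := hfun _ _ _ hab hac
    exact ih (TransGen.tail' hba hab)

theorem ReflTransGen.exists_of_ne (hab : ReflTransGen r a b) (hne : a ≠ b) : ∃ c, r a c := by
  obtain ⟨c, hac, -⟩ := hab.cases_head.resolve_left hne
  exact ⟨c, hac⟩

theorem wellFounded_flip_transGen [Finite β] (h : ∀ a, ¬ TransGen r a a) :
    WellFounded (flip (TransGen r)) :=
  haveI : IsTrans β (flip (TransGen r)) := ⟨fun _ _ _ hab hbc => hbc.trans hab⟩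
  haveI : Std.Irrefl (flip (TransGen r)) := ⟨h⟩
  Finite.wellFounded_of_trans_of_irrefl _

end Relation

namespace BarrierForests

open Finset Relation

theorem minW_le_minW {β γ : Type*} {s : Set β} {t : Set γ} {w : β → ℝ} {w' : γ → ℝ}
    (h : ∀ b ∈ t, ∃ a ∈ s, w a ≤ w' b) : minW s w ≤ minW t w' := by
  refine sInf_le_sInf_of_isCoinitialFor ?_
  rintro _ ⟨b, hb, rfl⟩
  obtain ⟨a, ha, hab⟩ := h b hb
  exact ⟨_, ⟨a, ha, rfl⟩, EReal.coe_le_coe_iff.mpr hab⟩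

section Forests

variable {α : Type*}

def IsFunctional (A : Finset (α × α)) : Prop :=
  ∀ i j j', (i, j) ∈ A → (i, j') ∈ A → j = j'

section Basin

noncomputable def basin (A : Finset (α × α)) (S : Finset α) (q : α) : Finset α :=
  S.filter fun x => ReflTransGen (fun a b => (a, b) ∈ A ∧ b ∈ S) x q

variable {A : Finset (α × α)} {S : Finset α} {q i j : α}

theorem basin_subset : basin A S q ⊆ S := filter_subset _ _

theorem self_mem_basin (hq : q ∈ S) : q ∈ basin A S q := mem_filter.mpr ⟨hq, .refl⟩

theorem mem_basin_of_arc (hij : (i, j) ∈ A) (hi : i ∈ S) (hj : j ∈ basin A S q) :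
    i ∈ basin A S q :=
  mem_filter.mpr ⟨hi, .head ⟨hij, basin_subset hj⟩ (mem_filter.mp hj).2⟩

theorem IsFunctional.mem_basin (hA : IsFunctional A) (hi : i ∈ basin A S q) (hiq : i ≠ q)
    (hij : (i, j) ∈ A) : j ∈ basin A S q := by
  obtain ⟨k, ⟨hik, hkS⟩, hkq⟩ := (mem_filter.mp hi).2.cases_head.resolve_left hiq
  obtain rfl := hA i j k hij hik
  exact mem_filter.mpr ⟨hkS, hkq⟩

theorem reflTransGen_of_mem_basin {T : Finset (α × α)}
    (hT : ∀ i j, (i, j) ∈ A → i ∈ basin A S q → i ≠ q → (i, j) ∈ T) (hi : i ∈ basin A S q) :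
    ReflTransGen (arcRel T) i q := by
  obtain ⟨hiS, hiq⟩ := mem_filter.mp hi
  clear hi
  induction hiq using ReflTransGen.head_induction_on with
  | refl => exact .refl
  | @head a b hab hbq ih =>
    by_cases haq : a = q
    · exact haq ▸ .refl
    · exact .head (hT a b hab.1 (mem_filter.mpr ⟨hiS, .head hab hbq⟩) haq) (ih hab.2)

theorem exists_exit [Finite α] (hA : ∀ i, ¬ TransGen (arcRel A) i i)
    (hAS : ∀ i ∈ S, ∃ j, (i, j) ∈ A) (hi : i ∈ S) :
    ∃ q ∈ S, ∃ r ∉ S, (q, r) ∈ A ∧ i ∈ basin A S q := by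
  induction i using (wellFounded_flip_transGen hA).induction with
  | _ i ih =>
  obtain ⟨j, hij⟩ := hAS i hi
  by_cases hj : j ∈ S
  · obtain ⟨q, hq, r, hr, hqr, hjq⟩ := ih j (.single hij) hj
    exact ⟨q, hq, r, hr, hqr, mem_basin_of_arc hij hi hjq⟩
  · exact ⟨i, hi, j, hj, hij, self_mem_basin hi⟩

end Basin

section TreeVerts

variable [Fintype α] {F : Finset (α × α)} {s i j : α}

theorem mem_treeVerts : i ∈ treeVerts F s ↔ ReflTransGen (arcRel F) i s := by
  simp [treeVerts]

theorem self_mem_treeVerts : s ∈ treeVerts F s := mem_treeVerts.mpr .refl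

theorem mem_treeVerts_of_arc (hij : (i, j) ∈ F) (hj : j ∈ treeVerts F s) :
    i ∈ treeVerts F s :=
  mem_treeVerts.mpr (.head hij (mem_treeVerts.mp hj))

theorem mem_treeVerts_of_arc_of_root [DecidableEq α] (hs : s ∈ rootSet F) (hF : IsFunctional F)
    (hij : (i, j) ∈ F) (hi : i ∈ treeVerts F s) : j ∈ treeVerts F s := by
  have his : i ≠ s := by
    rintro rfl
    exact (mem_filter.mp hs).2 j hij
  obtain ⟨c, hic, hcs⟩ := (mem_treeVerts.mp hi).cases_head.resolve_left his
  exact hF i j c hij hic ▸ mem_treeVerts.mpr hcs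

end TreeVerts

section TreeOn

variable {E T : Finset (α × α)} {S : Finset α} {q : α}

theorem IsTreeOn.isFunctional (hT : IsTreeOn E T S q) : IsFunctional T := by
  obtain ⟨-, -, hends, huniq, hq, -⟩ := hT
  intro i j j' hj hj'
  have hiq : i ≠ q := by
    rintro rfl
    exact hq j hj
  exact (huniq i (hends _ hj).1 hiq).unique hj hj'

theorem IsTreeOn.not_transGen_self (hT : IsTreeOn E T S q) (i : α) :
    ¬ TransGen (arcRel T) i i := by
  have ⟨_, _, hends, _, hq, hreach⟩ := hT
  intro hii
  obtain ⟨j, hij, -⟩ := TransGen.head'_iff.mp hii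
  exact not_transGen_self_of_reflTransGen_sink hT.isFunctional hq (hreach i (hends _ hij).1) hii

end TreeOn

end Forests

section Splice

variable {α : Type*} [DecidableEq α]

section Weights

variable (v : α → α → ℝ) (A : Finset (α × α)) (Y Z : Finset α)

theorem aweightOn_univ [Fintype α] : aweightOn v A univ = aweight v A := by
  simp [aweightOn, aweight]

theorem aweightOn_eq_aweight {A : Finset (α × α)} {Z : Finset α} (h : ∀ a ∈ A, a.1 ∈ Z) :
    aweightOn v A Z = aweight v A := by
  rw [aweightOn, filter_true_of_mem h, aweight]

theorem aweightOn_inter_add_aweightOn_sdiff :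
    aweightOn v A (Z ∩ Y) + aweightOn v A (Z \ Y) = aweightOn v A Z := by
  rw [aweightOn, aweightOn, aweightOn, ← sum_filter_add_sum_filter_not (A.filter (·.1 ∈ Z))
    (·.1 ∈ Y), filter_filter, filter_filter]
  simp only [mem_inter, mem_sdiff]

end Weights

def splice (A B : Finset (α × α)) (Y : Finset α) : Finset (α × α) :=
  A.filter (·.1 ∈ Y) ∪ B.filter (·.1 ∉ Y)

variable {A B E : Finset (α × α)} {Y : Finset α}

theorem mem_splice {a : α × α} : a ∈ splice A B Y ↔ a.1 ∈ Y ∧ a ∈ A ∨ a.1 ∉ Y ∧ a ∈ B := by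
  simp only [splice, mem_union, mem_filter, and_comm]

theorem splice_subset (hA : A ⊆ E) (hB : B ⊆ E) : splice A B Y ⊆ E :=
  union_subset ((filter_subset _ _).trans hA) ((filter_subset _ _).trans hB)

theorem aweightOn_splice (v : α → α → ℝ) (Z : Finset α) :
    aweightOn v (splice A B Y) Z = aweightOn v A (Z ∩ Y) + aweightOn v B (Z \ Y) := by
  rw [aweightOn, splice, filter_union, sum_union]
  · simp only [aweightOn, filter_filter, mem_inter, mem_sdiff, and_comm]
  · exact (disjoint_filter_filter_not A B (·.1 ∈ Y)).mono (filter_subset _ _) (filter_subset _ _)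

theorem splice_sdiff (S X : Finset α) :
    splice A B (S \ X) = splice B (splice A B S) X := by
  ext ⟨i, j⟩
  simp only [mem_splice, mem_sdiff]
  by_cases hX : i ∈ X <;> by_cases hS : i ∈ S <;> simp [hX, hS]

theorem IsFunctional.splice (hA : IsFunctional A) (hB : IsFunctional B) :
    IsFunctional (splice A B Y) := by
  intro i j j' hj hj'
  rw [mem_splice] at hj hj'
  by_cases hi : i ∈ Y
  · exact hA i j j' (hj.resolve_right (·.1 hi)).2 (hj'.resolve_right (·.1 hi)).2
  · exact hB i j j' (hj.resolve_left (hi ·.1)).2 (hj'.resolve_left (hi ·.1)).2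

/-- A cycle would have to leave `Y`, and once outside `Y` it follows `B` and never comes back. -/
theorem isEForest_splice (hA : IsEForest A) (hB : IsEForest B)
    (hBY : ∀ i j, (i, j) ∈ B → i ∉ Y → j ∉ Y) : IsEForest (splice A B Y) := by
  refine ⟨IsFunctional.splice hA.1 hB.1, fun i hii => ?_⟩
  by_cases hi : i ∈ Y
  · refine hA.2 i (hii.mono_of_pred_closed (P := (· ∈ Y)) (fun a b hab hb => ?_) hi)
    rcases mem_splice.mp hab with ⟨ha, hab⟩ | ⟨ha, hab⟩
    · exact ⟨ha, hab⟩
    · exact absurd hb (hBY a b hab ha)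
  · refine hB.2 i (hii.mono_of_succ_closed (P := (· ∉ Y)) (fun a b hab ha => ?_) hi)
    rcases mem_splice.mp hab with ⟨ha', -⟩ | ⟨-, hab⟩
    · exact absurd ha' ha
    · exact ⟨hBY a b hab ha, hab⟩

theorem rootSet_splice [Fintype α] (hA : ∀ i ∈ Y, ∃ j, (i, j) ∈ A)
    (hB : ∀ i ∈ Y, ∃ j, (i, j) ∈ B) : rootSet (splice A B Y) = rootSet B := by
  ext i
  simp only [rootSet, mem_filter, mem_univ, true_and, mem_splice, not_or, not_and]
  by_cases hi : i ∈ Y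
  · obtain ⟨j, hj⟩ := hA i hi
    obtain ⟨j', hj'⟩ := hB i hi
    exact ⟨fun h => absurd hj ((h j).1 hi), fun h => absurd hj' (h j')⟩
  · simp [hi]

theorem IsFunctional.insert_filter_erase {C : Finset (α × α)} {S : Finset α} {q r : α}
    (hC : IsFunctional C) (hqr : (q, r) ∈ C) (hq : q ∈ S) :
    insert (q, r) (C.filter (·.1 ∈ S.erase q)) = C.filter (·.1 ∈ S) := by
  ext ⟨i, j⟩
  simp only [mem_insert, mem_filter, mem_erase, Prod.mk.injEq]
  constructor
  · rintro (⟨rfl, rfl⟩ | ⟨hij, -, hi⟩)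
    exacts [⟨hqr, hq⟩, ⟨hij, hi⟩]
  · rintro ⟨hij, hi⟩
    by_cases hiq : i = q
    · subst hiq
      exact .inl ⟨rfl, hC _ _ _ hij hqr⟩
    · exact .inr ⟨hij, hiq, hi⟩

section CTree

variable {T : Finset (α × α)} {S : Finset α} {q r : α}

theorem IsTreeOn.fst_mem_of_mem_insert (hT : IsTreeOn E T S q) :
    ∀ a ∈ insert (q, r) T, a.1 ∈ S := by
  have ⟨hqS, _, hends, _⟩ := hT
  simp only [forall_mem_insert]
  exact ⟨hqS, fun a ha => (hends a ha).1⟩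

theorem IsTreeOn.isEForest_insert (hT : IsTreeOn E T S q) (hr : r ∉ S) :
    IsEForest (insert (q, r) T) := by
  have ⟨_, _, hends, _, hq, _⟩ := hT
  refine ⟨fun i j j' hj hj' => ?_, fun i hii => ?_⟩
  · rw [mem_insert, Prod.mk.injEq] at hj hj'
    rcases hj with ⟨rfl, rfl⟩ | hj <;> rcases hj' with ⟨hi, rfl⟩ | hj'
    · rfl
    · exact absurd hj' (hq j')
    · exact absurd (hi ▸ hj) (hq j)
    · exact hT.isFunctional i j j' hj hj'
  · obtain ⟨j, hij, -⟩ := TransGen.head'_iff.mp hii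
    refine hT.not_transGen_self i (hii.mono_of_pred_closed (P := (· ∈ S)) (fun a b hab hb => ?_)
      (hT.fst_mem_of_mem_insert _ hij))
    rcases mem_insert.mp hab with hab | hab
    · exact absurd ((Prod.mk.injEq _ _ _ _).mp hab).2 (ne_of_mem_of_not_mem hb hr)
    · exact ⟨(hends _ hab).1, hab⟩

theorem muCirc_le_lamCirc (v : α → α → ℝ) (E : Finset (α × α)) (S : Finset α) :
    muCirc v E S ≤ lamCirc v E S := by
  refine minW_le_minW ?_
  rintro _ ⟨q, -, r, hr, T, hT, hqr, rfl⟩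
  have ⟨_, hTE, _, huniq, _⟩ := hT
  refine ⟨insert (q, r) T, ⟨insert_subset hqr hTE, hT.isEForest_insert hr, fun i hi => ?_⟩,
    (aweightOn_eq_aweight v hT.fst_mem_of_mem_insert).le⟩
  by_cases hiq : i = q
  · exact ⟨r, hiq ▸ mem_insert_self _ _⟩
  · obtain ⟨j, hj, -⟩ := huniq i hi hiq
    exact ⟨j, mem_insert_of_mem hj⟩

end CTree

/-- Every vertex of `S` reaches `s` along `F`, and from `s`, which lies in the basin, `A` leads
on to `q`. -/
theorem isTreeOn_splice_basin {F : Finset (α × α)} {S : Finset α} {s q : α}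
    (hAE : A ⊆ E) (hFE : F ⊆ E) (hA : IsFunctional A) (hF : IsFunctional F)
    (hAS : ∀ i ∈ S, ∃ j, (i, j) ∈ A) (hFS : ∀ i j, (i, j) ∈ F → i ∈ S → j ∈ S)
    (hSs : ∀ i ∈ S, ReflTransGen (arcRel F) i s) (hqS : q ∈ S) (hsq : s ∈ basin A S q) :
    IsTreeOn E ((splice A F (basin A S q)).filter (·.1 ∈ S.erase q)) S q := by
  set X := basin A S q
  set T := (splice A F X).filter (·.1 ∈ S.erase q)
  have hqX : q ∈ X := self_mem_basin hqS
  have mem_T : ∀ {i j}, (i, j) ∈ T ↔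
      i ∈ S ∧ i ≠ q ∧ (i ∈ X ∧ (i, j) ∈ A ∨ i ∉ X ∧ (i, j) ∈ F) := by
    intro i j
    simp only [T, mem_filter, mem_erase, mem_splice]
    tauto
  have hX : ∀ i ∈ X, ReflTransGen (arcRel T) i q := fun i =>
    reflTransGen_of_mem_basin fun i j hij hi hiq => mem_T.mpr ⟨basin_subset hi, hiq, .inl ⟨hi, hij⟩⟩
  refine ⟨hqS, (filter_subset _ _).trans (splice_subset hAE hFE), ?_, fun i hiS hiq => ?_,
    fun j hqj => (mem_T.mp hqj).2.1 rfl, fun i hiS => ?_⟩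
  · rintro ⟨i, j⟩ hij
    obtain ⟨hiS, hiq, ⟨hiX, hij⟩ | ⟨-, hij⟩⟩ := mem_T.mp hij
    · exact ⟨hiS, basin_subset (hA.mem_basin hiX hiq hij)⟩
    · exact ⟨hiS, hFS i j hij hiS⟩
  · refine existsUnique_of_exists_of_unique ?_ fun j j' hj hj' =>
      hA.splice hF i j j' (mem_filter.mp hj).1 (mem_filter.mp hj').1
    by_cases hiX : i ∈ X
    · obtain ⟨j, hj⟩ := hAS i hiS
      exact ⟨j, mem_T.mpr ⟨hiS, hiq, .inl ⟨hiX, hj⟩⟩⟩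
    · obtain ⟨j, hj⟩ := (hSs i hiS).exists_of_ne (ne_of_mem_of_not_mem hsq hiX).symm
      exact ⟨j, mem_T.mpr ⟨hiS, hiq, .inr ⟨hiX, hj⟩⟩⟩
  · induction hSs i hiS using ReflTransGen.head_induction_on with
    | refl => exact hX s hsq
    | @head a b hab _ ih =>
      by_cases haX : a ∈ X
      · exact hX a haX
      · exact .head (mem_T.mpr ⟨hiS, (ne_of_mem_of_not_mem hqX haX).symm, .inr ⟨haX, hab⟩⟩)
          (ih (hFS a b hab hiS))

end Splice

variable {α : Type*} [Fintype α] [DecidableEq α]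

section MinForest

variable {v : α → α → ℝ} {E F A : Finset (α × α)} {k : ℕ}

theorem IsMinForest.subset (hF : IsMinForest v E k F) : F ⊆ E := hF.1.1

theorem IsMinForest.isEForest (hF : IsMinForest v E k F) : IsEForest F := hF.1.2.1

theorem IsMinForest.aweight_le (hF : IsMinForest v E k F) {N : Finset (α × α)}
    (hN : N ∈ FSet E k) : aweight v F ≤ aweight v N := by
  have h : (aweight v F : EReal) ≤ aweight v N := hF.2 ▸ sInf_le ⟨N, hN, rfl⟩
  exact_mod_cast h

theorem IsMinForest.aweightOn_le (hF : IsMinForest v E k F) (hAE : A ⊆ E) {Y : Finset α}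
    (hN : IsEForest (splice A F Y)) (hroots : rootSet (splice A F Y) = rootSet F) :
    aweightOn v F Y ≤ aweightOn v A Y := by
  have h := hF.aweight_le ⟨splice_subset hAE hF.subset, hN, hroots ▸ hF.1.2.2⟩
  rw [← aweightOn_univ v F, ← aweightOn_univ v (splice A F Y), aweightOn_splice, univ_inter,
    ← aweightOn_inter_add_aweightOn_sdiff v F Y, univ_inter] at h
  linarith

variable {s q : α}

theorem IsMinForest.aweightOn_sdiff_basin_le (hF : IsMinForest v E k F) (hAE : A ⊆ E)
    (hA : IsEForest A) (hAS : ∀ i ∈ treeVerts F s, ∃ j, (i, j) ∈ A)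
    (hsq : s ∈ basin A (treeVerts F s) q) :
    aweightOn v F (treeVerts F s \ basin A (treeVerts F s) q) ≤
      aweightOn v A (treeVerts F s \ basin A (treeVerts F s) q) := by
  set S := treeVerts F s
  set X := basin A S q
  refine hF.aweightOn_le hAE ?_ (rootSet_splice (fun i hi => hAS i (mem_sdiff.mp hi).1)
    fun i hi => ?_)
  · rw [splice_sdiff]
    refine isEForest_splice hF.isEForest (isEForest_splice hA hF.isEForest
      fun i j hij hi hj => hi (mem_treeVerts_of_arc hij hj)) fun i j hij hiX hjX => ?_
    rcases mem_splice.mp hij with ⟨hiS, hij⟩ | ⟨hiS, hij⟩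
    · exact hiX (mem_basin_of_arc hij hiS hjX)
    · exact hiS (mem_treeVerts_of_arc hij (basin_subset hjX))
  · obtain ⟨hiS, hiX⟩ := mem_sdiff.mp hi
    exact (mem_treeVerts.mp hiS).exists_of_ne (ne_of_mem_of_not_mem hsq hiX).symm

theorem IsMinForest.exists_isCTreeOn_aweight_le (hF : IsMinForest v E k F)
    (hs : s ∈ rootSet F) (hAE : A ⊆ E) (hA : IsEForest A)
    (hAS : ∀ i ∈ treeVerts F s, ∃ j, (i, j) ∈ A) :
    ∃ T, (∃ q ∈ treeVerts F s, IsCTreeOn E T (treeVerts F s) q) ∧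
      aweight v T ≤ aweightOn v A (treeVerts F s) := by
  set S := treeVerts F s
  obtain ⟨q, hqS, r, hrS, hqr, hsq⟩ := exists_exit hA.2 hAS self_mem_treeVerts
  set X := basin A S q
  have hXS : S ∩ X = X := inter_eq_right.mpr basin_subset
  have hF₁ : IsFunctional F := hF.isEForest.1
  have hTree := isTreeOn_splice_basin hAE hF.subset hA.1 hF₁ hAS
    (fun i j hij hi => mem_treeVerts_of_arc_of_root hs hF₁ hij hi)
    (fun i hi => mem_treeVerts.mp hi) hqS hsq
  refine ⟨_, ⟨q, hqS, r, hrS, _, hTree, hAE hqr, rfl⟩, ?_⟩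
  rw [(IsFunctional.splice hA.1 hF₁).insert_filter_erase
    (mem_splice.mpr (.inl ⟨self_mem_basin hqS, hqr⟩)) hqS]
  calc aweight v ((splice A F X).filter (·.1 ∈ S))
      = aweightOn v A X + aweightOn v F (S \ X) := by
        show aweightOn v (splice A F X) S = _
        rw [aweightOn_splice, hXS]
    _ ≤ aweightOn v A X + aweightOn v A (S \ X) := by
        gcongr
        exact hF.aweightOn_sdiff_basin_le hAE hA hAS hsq
    _ = aweightOn v A S := by rw [← aweightOn_inter_add_aweightOn_sdiff v A X S, hXS]

theorem IsMinForest.lamCirc_le_muCirc (hF : IsMinForest v E k F) (hs : s ∈ rootSet F) :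
    lamCirc v E (treeVerts F s) ≤ muCirc v E (treeVerts F s) :=
  minW_le_minW fun _ ⟨hAE, hA, hAS⟩ => hF.exists_isCTreeOn_aweight_le hs hAE hA hAS

end MinForest

theorem statement0_general (v : α → α → ℝ) (E : Finset (α × α))
    (k : ℕ) (F : Finset (α × α)) (hF : IsMinForest v E k F)
    (s : α) (hs : s ∈ rootSet F) :
    muCirc v E (treeVerts F s) = lamCirc v E (treeVerts F s) :=
  le_antisymm (muCirc_le_lamCirc v E _) (hF.lamCirc_le_muCirc hs)

/-- Theorem 1.  If `F` is a minimal spanning entering forest with `k`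
trees and `s` is one of its roots, then `μ^∘_S = λ^∘_S` where `S = V(T^F_s)`. -/
theorem statement0 (v : α → α → ℝ) (E : Finset (α × α)) (hE : ∀ i, (i, i) ∉ E)
    (k : ℕ) (F : Finset (α × α)) (hF : IsMinForest v E k F)
    (s : α) (hs : s ∈ rootSet F) :
    muCirc v E (treeVerts F s) = lamCirc v E (treeVerts F s) :=
  statement0_general v E k F hF s hs

end BarrierForests
end

section
/- Let F ∈ F̃^k, let y ∈ K_F, and let G ∈ F̃^{k−1} ∩ R^F_y. Suppose the head of the unique arc of G coming from the set V(T^F_y) belongs to V(T^F_x) for a root x ∈ K_F. Then λ^•_{V(T^G_x)} = λ^•_{V(T^F_x)} + λ°_{V(T^F_y)}. -/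
open scoped Classical

/-!
Both sides are weights of explicit arc sets. Outside `V(T^F_y)` the forest `G` agrees with `F`,
and the arcs of `G` with tail in `V(T^F_y)` form a tree of `𝓣^∘` whose extra arc ends in
`T^F_x`; hence `T^G_x` is the disjoint union of `T^F_x` and that tree. Each of the three trees
has minimum weight in its class by an exchange argument: if no arc of a minimal forest enters a
vertex set `S` from outside, replacing its arcs with tail in `S` by any entering forest with tails
in `S` and the same number of roots in `S` yields a forest with the same number of trees, which
therefore cannot be lighter.
-/

namespace BarrierForests

section Relations

variable {α : Type*} {A B : Finset (α × α)}

theorem eq_of_reflTransGen_of_sinks (hfun : ∀ i j j', (i, j) ∈ A → (i, j') ∈ A → j = j')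
    {i z w : α} (hz : Relation.ReflTransGen (arcRel A) i z)
    (hw : Relation.ReflTransGen (arcRel A) i w) (hzs : ∀ j, (z, j) ∉ A)
    (hws : ∀ j, (w, j) ∉ A) : z = w := by
  induction hz using Relation.ReflTransGen.head_induction_on with
  | refl =>
    rcases hw.cases_head with h | ⟨c, hc, -⟩
    · exact h
    · exact absurd hc (hzs c)
  | head hic _ ih =>
    rcases hw.cases_head with h | ⟨c', hic', hc'w⟩
    · exact absurd hic (h ▸ hws _)
    · exact ih (hfun _ _ _ hic' hic ▸ hc'w)

theorem isEForest_of_exists_sink (hfun : ∀ i j j', (i, j) ∈ A → (i, j') ∈ A → j = j')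
    (hsink : ∀ i, ∃ z, Relation.ReflTransGen (arcRel A) i z ∧ ∀ j, (z, j) ∉ A) :
    IsEForest A := by
  refine ⟨hfun, fun i hcyc => ?_⟩
  obtain ⟨z, hiz, hz⟩ := hsink i
  induction hiz using Relation.ReflTransGen.head_induction_on with
  | refl =>
    obtain ⟨c, hc, -⟩ := Relation.TransGen.head'_iff.mp hcyc
    exact hz c hc
  | head hic _ ih =>
    -- a cycle through `i` rotates to a cycle through the successor of `i`
    obtain ⟨c', hic', hc'i⟩ := Relation.TransGen.head'_iff.mp hcyc
    exact ih (.tail' (hfun _ _ _ hic' hic ▸ hc'i) hic)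

theorem IsEForest.exists_sink [Finite α] (hA : IsEForest A) (i : α) :
    ∃ z, Relation.ReflTransGen (arcRel A) i z ∧ ∀ j, (z, j) ∉ A := by
  have hwf : WellFounded (flip (arcRel A)) := by
    have : IsTrans α (Relation.TransGen (flip (arcRel A))) := ⟨fun _ _ _ => .trans⟩
    have : Std.Irrefl (Relation.TransGen (flip (arcRel A))) :=
      ⟨fun i h => hA.2 i (Relation.transGen_swap.mp h)⟩
    exact Subrelation.wf Relation.TransGen.single (Finite.wellFounded_of_trans_of_irrefl _)
  induction i using hwf.induction with
  | _ i ih =>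
    by_cases h : ∃ j, (i, j) ∈ A
    · obtain ⟨j, hj⟩ := h
      obtain ⟨z, hjz, hz⟩ := ih j hj
      exact ⟨z, .head hj hjz, hz⟩
    · exact ⟨i, .refl, not_exists.mp h⟩

theorem IsTreeOn.functional {E T : Finset (α × α)} {S : Finset α} {q : α}
    (hT : IsTreeOn E T S q) : ∀ i j j', (i, j) ∈ T → (i, j') ∈ T → j = j' := by
  intro i j j' hj hj'
  by_cases hiq : i = q
  · exact absurd hj (hiq ▸ hT.2.2.2.2.1 j)
  · exact (hT.2.2.2.1 i (hT.2.2.1 _ hj).1 hiq).unique hj hj'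

theorem IsTreeOn.isEForest {E T : Finset (α × α)} {S : Finset α} {q : α}
    (hT : IsTreeOn E T S q) : IsEForest T := by
  refine isEForest_of_exists_sink hT.functional fun i => ?_
  by_cases hi : i ∈ S
  · exact ⟨q, hT.2.2.2.2.2 i hi, hT.2.2.2.2.1⟩
  · exact ⟨i, .refl, fun j hj => hi (hT.2.2.1 _ hj).1⟩

theorem minW_eq_of_isMinOn {β : Type*} {s : Set β} {w : β → ℝ} {b : β} (hb : b ∈ s)
    (hmin : IsMinOn w s b) : minW s w = (w b : EReal) :=
  le_antisymm (sInf_le ⟨b, hb, rfl⟩) <| le_sInf <| by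
    rintro _ ⟨x, hx, rfl⟩
    exact EReal.coe_le_coe_iff.mpr (isMinOn_iff.mp hmin x hx)

end Relations

section Forests

variable {α : Type*} [Fintype α] {A : Finset (α × α)}

@[simp] theorem mem_treeVerts_s5 {i q : α} :
    i ∈ treeVerts A q ↔ Relation.ReflTransGen (arcRel A) i q := by
  simp [treeVerts]

theorem root_mem_treeVerts (q : α) : q ∈ treeVerts A q := mem_treeVerts_s5.mpr .refl

theorem notMem_treeVerts_of_arc {i j q : α} (hij : (i, j) ∈ A) (hi : i ∉ treeVerts A q) :
    j ∉ treeVerts A q :=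
  fun hj => hi (mem_treeVerts_s5.mpr (.head hij (mem_treeVerts_s5.mp hj)))

variable [DecidableEq α] {B E : Finset (α × α)} {S : Finset α}

@[simp] theorem mem_rootSet {i : α} : i ∈ rootSet A ↔ ∀ j, (i, j) ∉ A := by
  simp [rootSet]

theorem rootSet_anti (h : B ⊆ A) : rootSet A ⊆ rootSet B := by
  intro i hi
  simp only [mem_rootSet] at hi ⊢
  exact fun j hj => hi j (h hj)

theorem eq_of_mem_rootSet_of_mem_treeVerts {r q : α} (hr : r ∈ rootSet A)
    (hrq : r ∈ treeVerts A q) : r = q := by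
  rcases (mem_treeVerts_s5.mp hrq).cases_head with h | ⟨c, hc, -⟩
  · exact h
  · exact absurd hc (mem_rootSet.mp hr c)

theorem rootSet_inter_treeVerts {q : α} (hq : q ∈ rootSet A) :
    rootSet A ∩ treeVerts A q = {q} := by
  ext r
  simp only [Finset.mem_inter, Finset.mem_singleton]
  constructor
  · exact fun ⟨hr, hrq⟩ => eq_of_mem_rootSet_of_mem_treeVerts hr hrq
  · rintro rfl
    exact ⟨hq, root_mem_treeVerts r⟩

theorem IsEForest.exists_root (hA : IsEForest A) (i : α) :
    ∃ z ∈ rootSet A, i ∈ treeVerts A z := by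
  obtain ⟨z, hiz, hz⟩ := hA.exists_sink i
  exact ⟨z, mem_rootSet.mpr hz, mem_treeVerts_s5.mpr hiz⟩

theorem IsEForest.eq_of_mem_treeVerts (hA : IsEForest A) {q q' i : α} (hq : q ∈ rootSet A)
    (hq' : q' ∈ rootSet A) (h : i ∈ treeVerts A q) (h' : i ∈ treeVerts A q') : q = q' :=
  eq_of_reflTransGen_of_sinks hA.1 (mem_treeVerts_s5.mp h) (mem_treeVerts_s5.mp h')
    (mem_rootSet.mp hq) (mem_rootSet.mp hq')

theorem IsEForest.head_mem_treeVerts (hA : IsEForest A) {q i j : α} (hq : q ∈ rootSet A)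
    (hij : (i, j) ∈ A) (hi : i ∈ treeVerts A q) : j ∈ treeVerts A q := by
  rcases (mem_treeVerts_s5.mp hi).cases_head with rfl | ⟨c, hic, hcq⟩
  · exact absurd hij (mem_rootSet.mp hq j)
  · exact mem_treeVerts_s5.mpr (hA.1 _ _ _ hic hij ▸ hcq)

theorem reflTransGen_treeArcs {i q : α} (hi : i ∈ treeVerts A q) :
    Relation.ReflTransGen (arcRel (treeArcs A q)) i q := by
  induction mem_treeVerts_s5.mp hi using Relation.ReflTransGen.head_induction_on with
  | refl => exact .refl
  | head hic hcq ih =>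
    exact .head (Finset.mem_filter.mpr ⟨hic, mem_treeVerts_s5.mpr (.head hic hcq)⟩)
      (ih (mem_treeVerts_s5.mpr hcq))

theorem treeArcs_isTreeOn (hAE : A ⊆ E) (hA : IsEForest A) {q : α} (hq : q ∈ rootSet A) :
    IsTreeOn E (treeArcs A q) (treeVerts A q) q := by
  have hsub : treeArcs A q ⊆ A := Finset.filter_subset _ _
  refine ⟨root_mem_treeVerts q, hsub.trans hAE, fun a ha => ?_, fun i hi hiq => ?_,
    fun j hj => mem_rootSet.mp hq j (hsub hj), fun i hi => reflTransGen_treeArcs hi⟩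
  · obtain ⟨ha, haq⟩ := Finset.mem_filter.mp ha
    exact ⟨haq, hA.head_mem_treeVerts hq ha haq⟩
  · rcases (mem_treeVerts_s5.mp hi).cases_head with h | ⟨c, hc, -⟩
    · exact absurd h hiq
    · exact ⟨c, Finset.mem_filter.mpr ⟨hc, hi⟩, fun j hj => hA.1 _ _ _ (hsub hj) hc⟩

theorem IsTreeOn.rootSet_inter {T : Finset (α × α)} {q : α} (hT : IsTreeOn E T S q) :
    rootSet T ∩ S = {q} := by
  ext i
  simp only [Finset.mem_inter, mem_rootSet, Finset.mem_singleton]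
  constructor
  · rintro ⟨hi, hiS⟩
    by_contra hiq
    obtain ⟨j, hj, -⟩ := hT.2.2.2.1 i hiS hiq
    exact hi j hj
  · rintro rfl
    exact ⟨hT.2.2.2.2.1, hT.1⟩

end Forests

section Exchange

variable {α : Type*} [DecidableEq α] {A B E : Finset (α × α)} {S : Finset α}

def swapArcs (A : Finset (α × α)) (S : Finset α) (B : Finset (α × α)) : Finset (α × α) :=
  A.filter (fun a => a.1 ∉ S) ∪ B

theorem swapArcs_subset (hA : A ⊆ E) (hB : B ⊆ E) : swapArcs A S B ⊆ E :=
  Finset.union_subset ((Finset.filter_subset _ _).trans hA) hB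

theorem aweight_eq_add_aweightOn (v : α → α → ℝ) (A : Finset (α × α)) (S : Finset α) :
    aweight v A = aweight v (A.filter fun a => a.1 ∉ S) + aweightOn v A S :=
  (Finset.sum_filter_not_add_sum_filter A _ _).symm

theorem aweight_swapArcs (v : α → α → ℝ) (hBtail : ∀ b ∈ B, b.1 ∈ S) :
    aweight v (swapArcs A S B) = aweight v (A.filter fun a => a.1 ∉ S) + aweight v B :=
  Finset.sum_union <| Finset.disjoint_left.mpr fun b hb hbB =>
    (Finset.mem_filter.mp hb).2 (hBtail b hbB)

theorem aweightOn_union (v : α → α → ℝ) (A : Finset (α × α)) {S T : Finset α}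
    (hST : Disjoint S T) : aweightOn v A (S ∪ T) = aweightOn v A S + aweightOn v A T := by
  unfold aweightOn
  simp only [Finset.mem_union, Finset.filter_or]
  exact Finset.sum_union <| Finset.disjoint_left.mpr fun a ha ha' =>
    Finset.disjoint_left.mp hST (Finset.mem_filter.mp ha).2 (Finset.mem_filter.mp ha').2

variable [Fintype α]

theorem IsEForest.exists_sink_swapArcs (hA : IsEForest A) (hBtail : ∀ b ∈ B, b.1 ∈ S)
    (hclosed : ∀ b ∈ A, b.1 ∉ S → b.2 ∉ S) {i : α} (hi : i ∉ S) :
    ∃ z, Relation.ReflTransGen (arcRel (swapArcs A S B)) i z ∧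
      ∀ j, (z, j) ∉ swapArcs A S B := by
  obtain ⟨z, hiz, hz⟩ := hA.exists_sink i
  have hpath : ∀ {m}, Relation.ReflTransGen (arcRel A) m z → m ∉ S →
      Relation.ReflTransGen (arcRel (swapArcs A S B)) m z ∧ z ∉ S := by
    intro m hmz
    induction hmz using Relation.ReflTransGen.head_induction_on with
    | refl => exact fun hzS => ⟨.refl, hzS⟩
    | head hmc _ ih =>
      intro hmS
      obtain ⟨hcz, hzS⟩ := ih (hclosed _ hmc hmS)
      exact ⟨.head (Finset.mem_union_left _ (Finset.mem_filter.mpr ⟨hmc, hmS⟩)) hcz, hzS⟩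
  obtain ⟨hiz', hzS⟩ := hpath hiz hi
  refine ⟨z, hiz', fun j hj => ?_⟩
  rcases Finset.mem_union.mp hj with hj | hj
  · exact hz j (Finset.mem_filter.mp hj).1
  · exact hzS (hBtail _ hj)

theorem isEForest_swapArcs (hA : IsEForest A) (hB : IsEForest B) (hBtail : ∀ b ∈ B, b.1 ∈ S)
    (hclosed : ∀ b ∈ A, b.1 ∉ S → b.2 ∉ S) : IsEForest (swapArcs A S B) := by
  refine isEForest_of_exists_sink (fun i j j' hj hj' => ?_) fun i => ?_
  · simp only [swapArcs, Finset.mem_union, Finset.mem_filter] at hj hj'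
    rcases hj with ⟨hj, hi⟩ | hj <;> rcases hj' with ⟨hj', hi'⟩ | hj'
    · exact hA.1 _ _ _ hj hj'
    · exact absurd (hBtail _ hj') hi
    · exact absurd (hBtail _ hj) hi'
    · exact hB.1 _ _ _ hj hj'
  · -- follow `B` to one of its sinks and, if that lies outside `S`, continue along `A`
    obtain ⟨z, hiz, hz⟩ := hB.exists_sink i
    have hiz' : Relation.ReflTransGen (arcRel (swapArcs A S B)) i z :=
      Relation.ReflTransGen.mono (fun _ _ h => Finset.mem_union_right _ h) _ _ hiz
    by_cases hzS : z ∈ S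
    · refine ⟨z, hiz', fun j hj => ?_⟩
      rcases Finset.mem_union.mp hj with hj | hj
      · exact (Finset.mem_filter.mp hj).2 hzS
      · exact hz j hj
    · obtain ⟨w, hzw, hw⟩ := hA.exists_sink_swapArcs hBtail hclosed hzS
      exact ⟨w, hiz'.trans hzw, hw⟩

theorem rootSet_swapArcs (hBtail : ∀ b ∈ B, b.1 ∈ S) :
    rootSet (swapArcs A S B) = rootSet A \ S ∪ rootSet B ∩ S := by
  ext i
  by_cases hi : i ∈ S
  · simp [swapArcs, hi]
  · have hiB : ∀ j, (i, j) ∉ B := fun j hj => hi (hBtail _ hj)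
    simp [swapArcs, hi, hiB]

theorem card_rootSet_swapArcs (hBtail : ∀ b ∈ B, b.1 ∈ S)
    (hroots : (rootSet A ∩ S).card = (rootSet B ∩ S).card) :
    (rootSet (swapArcs A S B)).card = (rootSet A).card := by
  rw [rootSet_swapArcs hBtail, Finset.card_union_of_disjoint, ← hroots,
    Finset.card_sdiff_add_card_inter]
  exact Finset.disjoint_left.mpr fun i hi hi' =>
    (Finset.mem_sdiff.mp hi).2 (Finset.mem_inter.mp hi').2

theorem IsMinForest.aweight_le_s5 {v : α → α → ℝ} {m : ℕ} (hA : IsMinForest v E m A)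
    (hB : B ∈ FSet E m) : aweight v A ≤ aweight v B :=
  EReal.coe_le_coe_iff.mp (hA.2 ▸ sInf_le ⟨B, hB, rfl⟩)

theorem IsMinForest.aweightOn_le_s5 {v : α → α → ℝ} {m : ℕ} (hA : IsMinForest v E m A)
    (hBE : B ⊆ E) (hB : IsEForest B) (hBtail : ∀ b ∈ B, b.1 ∈ S)
    (hclosed : ∀ b ∈ A, b.1 ∉ S → b.2 ∉ S)
    (hroots : (rootSet A ∩ S).card = (rootSet B ∩ S).card) :
    aweightOn v A S ≤ aweight v B := by
  obtain ⟨hAE, hAfor, hAcard⟩ := hA.1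
  have hle := hA.aweight_le_s5 (B := swapArcs A S B) ⟨swapArcs_subset hAE hBE,
    isEForest_swapArcs hAfor hB hBtail hclosed,
    (card_rootSet_swapArcs hBtail hroots).trans hAcard⟩
  rw [aweight_swapArcs v hBtail, aweight_eq_add_aweightOn v A S] at hle
  linarith

end Exchange

section MinimalTrees

variable {α : Type*} [DecidableEq α] {A B E : Finset (α × α)} {S : Finset α} {q : α}

theorem IsCTreeOn.subset (hB : IsCTreeOn E B S q) : B ⊆ E := by
  obtain ⟨r, -, T, hT, hqr, rfl⟩ := hB
  exact Finset.insert_subset hqr hT.2.1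

theorem IsCTreeOn.fst_mem (hB : IsCTreeOn E B S q) : ∀ b ∈ B, b.1 ∈ S := by
  obtain ⟨r, -, T, hT, -, rfl⟩ := hB
  intro b hb
  rcases Finset.mem_insert.mp hb with rfl | hb
  · exact hT.1
  · exact (hT.2.2.1 b hb).1

theorem IsCTreeOn.exists_arc (hB : IsCTreeOn E B S q) : ∀ i ∈ S, ∃ j, (i, j) ∈ B := by
  obtain ⟨r, -, T, hT, -, rfl⟩ := hB
  intro i hi
  by_cases hiq : i = q
  · exact ⟨r, hiq ▸ Finset.mem_insert_self _ _⟩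
  · obtain ⟨j, hj, -⟩ := hT.2.2.2.1 i hi hiq
    exact ⟨j, Finset.mem_insert_of_mem hj⟩

theorem IsCTreeOn.isEForest (hB : IsCTreeOn E B S q) : IsEForest B := by
  have hfst := hB.fst_mem
  obtain ⟨r, hr, T, hT, -, rfl⟩ := hB
  refine isEForest_of_exists_sink (fun i j j' hj hj' => ?_) fun i => ?_
  · simp only [Finset.mem_insert, Prod.mk.injEq] at hj hj'
    rcases hj with ⟨rfl, rfl⟩ | hj <;> rcases hj' with ⟨hiq, rfl⟩ | hj'
    · rfl
    · exact absurd hj' (hT.2.2.2.2.1 j')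
    · exact absurd (hiq ▸ hj) (hT.2.2.2.2.1 j)
    · exact hT.functional i j j' hj hj'
  · have hrsink : ∀ j, (r, j) ∉ insert (q, r) T := fun j hj => hr (hfst _ hj)
    by_cases hi : i ∈ S
    · refine ⟨r, .tail (Relation.ReflTransGen.mono (fun _ _ h => Finset.mem_insert_of_mem h)
        _ _ (hT.2.2.2.2.2 i hi)) (Finset.mem_insert_self _ _), hrsink⟩
    · exact ⟨i, .refl, fun j hj => hi (hfst _ hj)⟩

theorem filter_fst_mem_eq_insert (hA : ∀ i j j', (i, j) ∈ A → (i, j') ∈ A → j = j')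
    {p h : α} (hT : IsTreeOn E (restrictArcs A S) S p) (hp : (p, h) ∈ A) :
    A.filter (fun a => a.1 ∈ S) = insert (p, h) (restrictArcs A S) := by
  ext ⟨i, j⟩
  simp only [Finset.mem_filter, Finset.mem_insert, Prod.mk.injEq]
  constructor
  · rintro ⟨hij, hi⟩
    by_cases hip : i = p
    · subst hip
      exact Or.inl ⟨rfl, hA _ _ _ hij hp⟩
    · obtain ⟨c, hc, -⟩ := hT.2.2.2.1 i hi hip
      rw [hA _ _ _ hij (Finset.mem_filter.mp hc).1]
      exact Or.inr hc
  · rintro (⟨rfl, rfl⟩ | hij)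
    · exact ⟨hp, hT.1⟩
    · exact ⟨(Finset.mem_filter.mp hij).1, (Finset.mem_filter.mp hij).2.1⟩

variable [Fintype α] {v : α → α → ℝ} {m : ℕ}

theorem IsCTreeOn.rootSet_inter_eq_empty (hB : IsCTreeOn E B S q) : rootSet B ∩ S = ∅ := by
  refine Finset.eq_empty_of_forall_notMem fun i hi => ?_
  obtain ⟨hiB, hiS⟩ := Finset.mem_inter.mp hi
  obtain ⟨j, hj⟩ := hB.exists_arc i hiS
  exact mem_rootSet.mp hiB j hj

theorem IsMinForest.aweight_treeArcs_le (hA : IsMinForest v E m A) {x : α}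
    (hx : x ∈ rootSet A) {T : Finset (α × α)} (hT : IsTreeOn E T (treeVerts A x) q) :
    aweight v (treeArcs A x) ≤ aweight v T :=
  hA.aweightOn_le_s5 hT.2.1 hT.isEForest (fun b hb => (hT.2.2.1 b hb).1)
    (fun _ hb => notMem_treeVerts_of_arc hb)
    (by rw [rootSet_inter_treeVerts hx, hT.rootSet_inter, Finset.card_singleton,
      Finset.card_singleton])

theorem IsMinForest.lamBul_treeVerts (hA : IsMinForest v E m A) {x : α}
    (hx : x ∈ rootSet A) : lamBul v E (treeVerts A x) = aweight v (treeArcs A x) :=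
  minW_eq_of_isMinOn ⟨x, root_mem_treeVerts x, treeArcs_isTreeOn hA.1.1 hA.1.2.1 hx⟩
    (isMinOn_iff.mpr fun _ ⟨_, _, hT⟩ => hA.aweight_treeArcs_le hx hT)

theorem IsMinForest.lamCirc_eq (hA : IsMinForest v E m A)
    (hclosed : ∀ b ∈ A, b.1 ∉ S → b.2 ∉ S)
    (hC : IsCTreeOn E (A.filter fun a => a.1 ∈ S) S q) : lamCirc v E S = aweightOn v A S := by
  have hAS : rootSet A ∩ S = ∅ := Finset.subset_empty.mp
    (hC.rootSet_inter_eq_empty ▸ Finset.inter_subset_inter_right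
      (rootSet_anti (Finset.filter_subset _ A)))
  have hqS : q ∈ S := by
    obtain ⟨_, _, _, hT, _⟩ := hC
    exact hT.1
  refine minW_eq_of_isMinOn ⟨q, hqS, hC⟩ (isMinOn_iff.mpr fun B ⟨_, _, hB⟩ => ?_)
  exact hA.aweightOn_le_s5 hB.subset hB.isEForest hB.fst_mem hclosed
    (by rw [hAS, hB.rootSet_inter_eq_empty])

end MinimalTrees

section Descendant

variable {α : Type*} [Fintype α] [DecidableEq α] {E F G : Finset (α × α)} {y : α}

theorem IsDescendant.mem_rootSet_of_ne (hGd : IsDescendant E F G y) {q : α}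
    (hq : q ∈ rootSet F) (hqy : q ≠ y) : q ∈ rootSet G :=
  hGd.2.1 ▸ Finset.mem_sdiff.mpr ⟨hq, Finset.notMem_singleton.mpr hqy⟩

theorem IsDescendant.filter_fst_mem_treeVerts (hGd : IsDescendant E F G y) (hG : IsEForest G)
    {q : α} (hq : q ∈ rootSet F) (hqy : q ≠ y) :
    G.filter (fun a => a.1 ∈ treeVerts F q) = treeArcs F q := by
  have hqG := hGd.mem_rootSet_of_ne hq hqy
  have hind := hGd.2.2.1 q hqG
  ext ⟨i, j⟩
  constructor
  · intro hij
    obtain ⟨hijG, hi⟩ := Finset.mem_filter.mp hij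
    rcases (mem_treeVerts_s5.mp hi).cases_head with rfl | ⟨c, hic, -⟩
    · exact absurd hijG (mem_rootSet.mp hqG j)
    · -- `G` shares the `F`-arc `(i, c)`, so it is the arc of `G` out of `i`
      have hicF : (i, c) ∈ treeArcs F q := Finset.mem_filter.mpr ⟨hic, hi⟩
      have hicG : (i, c) ∈ G := (Finset.mem_filter.mp (hind ▸ hicF)).1
      rwa [hG.1 _ _ _ hijG hicG]
  · intro hij
    obtain ⟨hijG, hi, -⟩ := Finset.mem_filter.mp (hind ▸ hij)
    exact Finset.mem_filter.mpr ⟨hijG, hi⟩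

theorem IsDescendant.head_mem_treeVerts (hGd : IsDescendant E F G y) (hF : IsEForest F)
    (hG : IsEForest G) {q i j : α} (hq : q ∈ rootSet F) (hqy : q ≠ y) (hij : (i, j) ∈ G)
    (hi : i ∈ treeVerts F q) : j ∈ treeVerts F q := by
  have hijF : (i, j) ∈ treeArcs F q :=
    hGd.filter_fst_mem_treeVerts hG hq hqy ▸ Finset.mem_filter.mpr ⟨hij, hi⟩
  exact hF.head_mem_treeVerts hq (Finset.mem_filter.mp hijF).1 hi

theorem IsDescendant.mem_treeVerts_of_reflTransGen (hGd : IsDescendant E F G y)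
    (hF : IsEForest F) (hG : IsEForest G) {q i j : α} (hq : q ∈ rootSet F) (hqy : q ≠ y)
    (hij : Relation.ReflTransGen (arcRel G) i j) (hi : i ∈ treeVerts F q) :
    j ∈ treeVerts F q := by
  induction hij with
  | refl => exact hi
  | tail _ hbc ih => exact hGd.head_mem_treeVerts hF hG hq hqy hbc ih

theorem IsDescendant.snd_notMem_treeVerts (hGd : IsDescendant E F G y) (hF : IsEForest F)
    (hG : IsEForest G) : ∀ b ∈ G, b.1 ∉ treeVerts F y → b.2 ∉ treeVerts F y := by
  rintro ⟨i, j⟩ hij hi hj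
  obtain ⟨z, hz, hiz⟩ := hF.exists_root i
  have hzy : z ≠ y := by
    rintro rfl
    exact hi hiz
  exact hzy (hF.eq_of_mem_treeVerts hz hGd.1 (hGd.head_mem_treeVerts hF hG hz hzy hij hiz) hj)

theorem IsDescendant.isTreeOn_restrictArcs (hGd : IsDescendant E F G y) (hG : IsEForest G)
    {p h : α} (hp : (p, h) ∈ G) (hpy : p ∈ treeVerts F y) (hhy : h ∉ treeVerts F y) :
    IsTreeOn E (restrictArcs G (treeVerts F y)) (treeVerts F y) p := by
  obtain ⟨-, -, -, a, -, hT⟩ := hGd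
  -- every vertex of the tree other than its root `a` has its unique `G`-arc inside the tree
  obtain rfl : p = a := by
    by_contra hpa
    obtain ⟨j, hj, -⟩ := hT.2.2.2.1 p hpy hpa
    obtain ⟨hjG, -, hjy⟩ := Finset.mem_filter.mp hj
    exact hhy (hG.1 _ _ _ hp hjG ▸ hjy)
  exact hT

theorem IsDescendant.treeVerts_eq (hGd : IsDescendant E F G y) (hF : IsEForest F)
    (hG : IsEForest G) {x p h : α} (hx : x ∈ rootSet F) (hxy : x ≠ y)
    (hT : IsTreeOn E (restrictArcs G (treeVerts F y)) (treeVerts F y) p) (hp : (p, h) ∈ G)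
    (hhx : h ∈ treeVerts F x) : treeVerts G x = treeVerts F x ∪ treeVerts F y := by
  have hFxG : ∀ {i}, i ∈ treeVerts F x → Relation.ReflTransGen (arcRel G) i x := fun hi =>
    Relation.ReflTransGen.mono (fun _ _ hab => (Finset.mem_filter.mp
      (hGd.filter_fst_mem_treeVerts hG hx hxy ▸ hab)).1) _ _ (reflTransGen_treeArcs hi)
  ext i
  rw [Finset.mem_union, mem_treeVerts_s5]
  constructor
  · intro hix
    obtain ⟨z, hz, hiz⟩ := hF.exists_root i
    by_contra! hi
    have hzx : z ≠ x := by
      rintro rfl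
      exact hi.1 hiz
    have hzy : z ≠ y := by
      rintro rfl
      exact hi.2 hiz
    exact hzx (eq_of_mem_rootSet_of_mem_treeVerts hx
      (hGd.mem_treeVerts_of_reflTransGen hF hG hz hzy hix hiz)).symm
  · rintro (hi | hi)
    · exact hFxG hi
    · have hip : Relation.ReflTransGen (arcRel G) i p :=
        Relation.ReflTransGen.mono (fun _ _ hab => (Finset.mem_filter.mp hab).1) _ _
          (hT.2.2.2.2.2 i hi)
      exact hip.trans (.head hp (hFxG hhx))

theorem IsDescendant.aweight_treeArcs (hGd : IsDescendant E F G y) (hF : IsEForest F)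
    (hG : IsEForest G) {v : α → α → ℝ} {x p h : α} (hx : x ∈ rootSet F) (hxy : x ≠ y)
    (hT : IsTreeOn E (restrictArcs G (treeVerts F y)) (treeVerts F y) p) (hp : (p, h) ∈ G)
    (hhx : h ∈ treeVerts F x) :
    aweight v (treeArcs G x) = aweight v (treeArcs F x) + aweightOn v G (treeVerts F y) := by
  have hdisj : Disjoint (treeVerts F x) (treeVerts F y) :=
    Finset.disjoint_left.mpr fun _ hix hiy => hxy (hF.eq_of_mem_treeVerts hx hGd.1 hix hiy)
  calc aweight v (treeArcs G x)
      = aweightOn v G (treeVerts F x ∪ treeVerts F y) := by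
        rw [← hGd.treeVerts_eq hF hG hx hxy hT hp hhx]
        rfl
    _ = aweightOn v G (treeVerts F x) + aweightOn v G (treeVerts F y) :=
        aweightOn_union v G hdisj
    _ = aweight v (treeArcs F x) + aweightOn v G (treeVerts F y) := by
        rw [aweightOn, hGd.filter_fst_mem_treeVerts hG hx hxy]
        rfl

end Descendant

variable {α : Type*} [Fintype α] [DecidableEq α]

theorem statement5_general (v : α → α → ℝ) (E : Finset (α × α))
    (k : ℕ) (F : Finset (α × α)) (hF : IsMinForest v E k F)
    (y : α)
    (G : Finset (α × α)) (hGmin : IsMinForest v E (k - 1) G) (hGd : IsDescendant E F G y)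
    (x : α) (hx : x ∈ rootSet F)
    (harc : ∃ a ∈ G, a.1 ∈ treeVerts F y ∧ a.2 ∉ treeVerts F y ∧ a.2 ∈ treeVerts F x) :
    lamBul v E (treeVerts G x) = lamBul v E (treeVerts F x) + lamCirc v E (treeVerts F y) := by
  obtain ⟨⟨p, h⟩, hp, hpy, hhy, hhx⟩ := harc
  have hFforest := hF.1.2.1
  have hG := hGmin.1.2.1
  have hxy : x ≠ y := by
    rintro rfl
    exact hhy hhx
  have hT := hGd.isTreeOn_restrictArcs hG hp hpy hhy
  have hC : IsCTreeOn E (G.filter fun a => a.1 ∈ treeVerts F y) (treeVerts F y) p :=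
    ⟨h, hhy, _, hT, hGmin.1.1 hp, filter_fst_mem_eq_insert hG.1 hT hp⟩
  rw [hGmin.lamBul_treeVerts (hGd.mem_rootSet_of_ne hx hxy), hF.lamBul_treeVerts hx,
    hGmin.lamCirc_eq (hGd.snd_notMem_treeVerts hFforest hG) hC,
    hGd.aweight_treeArcs hFforest hG hx hxy hT hp hhx, EReal.coe_add]

/-- Proposition 2.  Let `F ∈ 𝓕̃^k`, `y ∈ K_F`,
`G ∈ 𝓕̃^{k-1} ∩ 𝓡^F_y`, and suppose the head of the unique arc of `G` leaving
`V(T^F_y)` lies in `V(T^F_x)` for a root `x ∈ K_F`.  Then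
`λ^•_{V(T^G_x)} = λ^•_{V(T^F_x)} + λ^∘_{V(T^F_y)}`. -/
theorem statement5 (v : α → α → ℝ) (E : Finset (α × α)) (hE : ∀ i, (i, i) ∉ E)
    (k : ℕ) (hk : 1 ≤ k) (F : Finset (α × α)) (hF : IsMinForest v E k F)
    (y : α) (hy : y ∈ rootSet F)
    (G : Finset (α × α)) (hGmin : IsMinForest v E (k - 1) G) (hGd : IsDescendant E F G y)
    (x : α) (hx : x ∈ rootSet F)
    (harc : ∃ a ∈ G, a.1 ∈ treeVerts F y ∧ a.2 ∉ treeVerts F y ∧ a.2 ∈ treeVerts F x) :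
    lamBul v E (treeVerts G x) = lamBul v E (treeVerts F x) + lamCirc v E (treeVerts F y) :=
  statement5_general v E k F hF y G hGmin hGd x hx harc

end BarrierForests
end

section
/- Let S ⊊ N and suppose T°_S ≠ ∅. Then μ°_S ≤ λ°_S. -/
open scoped Classical

namespace BarrierForests

variable {α : Type*} [Fintype α] [DecidableEq α]

/-- For `S ⊊ N` with `𝓣^∘_S ≠ ∅`, `μ^∘_S ≤ λ^∘_S`. -/
theorem statement6 (v : α → α → ℝ) (E : Finset (α × α)) (hE : ∀ i, (i, i) ∉ E)
    (S : Finset α) (hS : S ⊂ Finset.univ)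
    (hne : {T | ∃ q ∈ S, IsCTreeOn E T S q}.Nonempty) :
    muCirc v E S ≤ lamCirc v E S := by
  rw [lamCirc, minW]
  refine le_sInf ?_
  rintro x ⟨T, ⟨q, hqS, r, hrS, T', hT', hqrE, rfl⟩, rfl⟩
  obtain ⟨hq, hsub, htl, huniq, hqno, hreach⟩ := hT'
  set F : Finset (α × α) := insert (q, r) T' with hF
  have hmemF : ∀ a ∈ F, a.1 ∈ S := by
    intro a ha
    rcases Finset.mem_insert.mp ha with h | h
    · rw [h]; exact hq
    · exact (htl a h).1
  have hrq : r ≠ q := fun h => hrS (h ▸ hq)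
  have hfun : ∀ i j j', (i, j) ∈ F → (i, j') ∈ F → j = j' := by
    intro i j j' h1 h2
    rcases Finset.mem_insert.mp h1 with h1 | h1 <;>
      rcases Finset.mem_insert.mp h2 with h2 | h2
    · rw [Prod.mk.injEq] at h1 h2
      rw [h1.2, h2.2]
    · rw [Prod.mk.injEq] at h1
      exact absurd (h1.1 ▸ h2) (hqno j')
    · rw [Prod.mk.injEq] at h2
      exact absurd (h2.1 ▸ h1) (hqno j)
    · have hiS : i ∈ S := (htl _ h1).1
      have hiq : i ≠ q := fun he => hqno j (by rwa [he] at h1)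
      obtain ⟨j₀, _, huj⟩ := huniq i hiS hiq
      rw [huj j h1, huj j' h2]
  have hnoq : ∀ z, (q, z) ∈ F → z = r := by
    intro z hz
    rcases Finset.mem_insert.mp hz with h | h
    · rw [Prod.mk.injEq] at h; exact h.2
    · exact absurd h (hqno z)
  have hkey : ∀ y, Relation.ReflTransGen (arcRel T') y q →
      ¬ Relation.TransGen (arcRel F) y y := by
    intro y hy
    induction hy using Relation.ReflTransGen.head_induction_on with
    | refl =>
      intro hcyc
      obtain ⟨z, hz, hzq⟩ := Relation.TransGen.head'_iff.mp hcyc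
      rw [hnoq z hz] at hzq
      rcases hzq.cases_head with h | ⟨c, hc, _⟩
      · exact hrq h
      · exact hrS (hmemF (r, c) hc)
    | head harc htail ih =>
      rename_i a c
      intro hcyc
      obtain ⟨z, hz, hza⟩ := Relation.TransGen.head'_iff.mp hcyc
      have harcF : (a, c) ∈ F := Finset.mem_insert_of_mem harc
      have hzc : z = c := hfun a z c hz harcF
      subst hzc
      exact ih (Relation.TransGen.tail' hza harcF)
  have hacyc : ∀ i, ¬ Relation.TransGen (arcRel F) i i := by
    intro i hcyc
    obtain ⟨z, hz, _⟩ := Relation.TransGen.head'_iff.mp hcyc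
    exact hkey i (hreach i (hmemF (i, z) hz)) hcyc
  have hout : ∀ i ∈ S, ∃ j, (i, j) ∈ F := by
    intro i hiS
    by_cases hiq : i = q
    · exact ⟨r, hiq ▸ Finset.mem_insert_self _ _⟩
    · obtain ⟨j, hj, _⟩ := huniq i hiS hiq
      exact ⟨j, Finset.mem_insert_of_mem hj⟩
  have hFE : F ⊆ E := Finset.insert_subset hqrE hsub
  have hw : aweightOn v F S = aweight v F := by
    rw [aweightOn, aweight, Finset.filter_true_of_mem (fun a ha => hmemF a ha)]
  rw [muCirc, minW]
  exact sInf_le ⟨F, ⟨hFE, ⟨hfun, hacyc⟩, hout⟩, by simp only [hw]⟩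

end BarrierForests
end

section
/- Let P be a potential graph with barrier digraph V, let q ∈ S ⊆ N, let T_q ∈ T^{•q}_S be an entering tree subgraph of V with vertex set S and root q, and let T be the corresponding undirected tree. Then T_q has minimum weight among all entering trees in T^{•q}_S if and only if T has minimum weight among all undirected trees that are subgraphs of P with vertex set S. -/
open scoped Classical

lemma SimpleGraph.Reachable.exists_adj_dist_lt {V : Type*} {G : SimpleGraph V} {u v : V}
    (h : G.Reachable u v) (hne : u ≠ v) : ∃ w, G.Adj u w ∧ G.dist w v < G.dist u v := by
  obtain ⟨p, hp⟩ := h.exists_walk_length_eq_dist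
  cases p with
  | nil => exact absurd rfl hne
  | cons hadj p =>
    refine ⟨_, hadj, (SimpleGraph.dist_le p).trans_lt ?_⟩
    rw [← hp, SimpleGraph.Walk.length_cons]
    exact Nat.lt_succ_self _

namespace BarrierForests

variable {α : Type*}

namespace IsTreeOn

variable {E T : Finset (α × α)} {S : Finset α} {q : α}

lemma fst_ne_root (h : IsTreeOn E T S q) {a : α × α} (ha : a ∈ T) : a.1 ≠ q :=
  fun hq => h.2.2.2.2.1 a.2 (hq ▸ ha)

lemma snd_eq_of_mem (h : IsTreeOn E T S q) {i j j' : α} (hj : (i, j) ∈ T) (hj' : (i, j') ∈ T) :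
    j = j' :=
  (h.2.2.2.1 i (h.2.2.1 _ hj).1 (h.fst_ne_root hj)).unique hj hj'

lemma swap_notMem (h : IsTreeOn E T S q) {i j : α} (hij : (i, j) ∈ T) : (j, i) ∉ T := by
  intro hji
  -- `{i, j}` is closed under taking the unique successor, so it never reaches the root.
  have avoid : ∀ x, Relation.ReflTransGen (arcRel T) x q → x ≠ i ∧ x ≠ j := by
    intro x hx
    induction hx using Relation.ReflTransGen.head_induction_on with
    | refl => exact ⟨(h.fst_ne_root hij).symm, (h.fst_ne_root hji).symm⟩
    | head hxy _ ih =>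
      constructor <;> rintro rfl
      · exact ih.2 (h.snd_eq_of_mem hxy hij)
      · exact ih.1 (h.snd_eq_of_mem hxy hji)
  exact (avoid i (h.2.2.2.2.2 i (h.2.2.1 _ hij).1)).1 rfl

lemma injOn_sym2Mk (h : IsTreeOn E T S q) : Set.InjOn (fun a : α × α => s(a.1, a.2)) T := by
  rintro ⟨i, j⟩ hij ⟨k, l⟩ hkl heq
  rcases Sym2.eq_iff.1 heq with ⟨rfl, rfl⟩ | ⟨rfl, rfl⟩
  · rfl
  · exact absurd hkl (h.swap_notMem hij)

lemma sum_fst [DecidableEq α] {M : Type*} [AddCommMonoid M] (h : IsTreeOn E T S q) (f : α → M) :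
    ∑ a ∈ T, f a.1 = ∑ i ∈ S.erase q, f i := by
  refine Finset.sum_nbij Prod.fst
    (fun a ha => Finset.mem_erase.2 ⟨h.fst_ne_root ha, (h.2.2.1 a ha).1⟩) ?_ ?_ fun _ _ => rfl
  · rintro ⟨i, j⟩ hij ⟨k, l⟩ hkl (rfl : i = k)
    rw [h.snd_eq_of_mem hij hkl]
  · intro i hi
    obtain ⟨hiq, hiS⟩ := Finset.mem_erase.1 hi
    obtain ⟨j, hij, -⟩ := h.2.2.2.1 i hiS hiq
    exact ⟨(i, j), hij, rfl⟩

lemma card_add_one [DecidableEq α] (h : IsTreeOn E T S q) : T.card + 1 = S.card := by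
  have := h.sum_fst fun _ => 1
  simp only [Finset.sum_const, smul_eq_mul, mul_one] at this
  rw [this]
  exact Finset.card_erase_add_one h.1

end IsTreeOn

lemma isTreeOn_image_succ [DecidableEq α] {E : Finset (α × α)} {S : Finset α} {q : α}
    (hq : q ∈ S) (succ : α → α) (d : α → ℕ)
    (hsucc : ∀ i ∈ S, i ≠ q → succ i ∈ S ∧ (i, succ i) ∈ E ∧ d (succ i) < d i) :
    IsTreeOn E ((S.erase q).image fun i => (i, succ i)) S q := by
  have mem_arc : ∀ i ∈ S, i ≠ q → (i, succ i) ∈ (S.erase q).image fun i => (i, succ i) :=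
    fun i hi hiq => Finset.mem_image.2 ⟨i, Finset.mem_erase.2 ⟨hiq, hi⟩, rfl⟩
  have arc_spec :
      ∀ a ∈ (S.erase q).image fun i => (i, succ i), a ∈ E ∧ a.1 ∈ S ∧ a.2 ∈ S := by
    intro a ha
    obtain ⟨i, hi, rfl⟩ := Finset.mem_image.1 ha
    obtain ⟨hiq, hiS⟩ := Finset.mem_erase.1 hi
    exact ⟨(hsucc i hiS hiq).2.1, hiS, (hsucc i hiS hiq).1⟩
  refine ⟨hq, fun a ha => (arc_spec a ha).1, fun a ha => (arc_spec a ha).2, ?_, ?_, ?_⟩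
  · intro i hi hiq
    refine ⟨succ i, mem_arc i hi hiq, fun j hj => ?_⟩
    obtain ⟨k, -, hk⟩ := Finset.mem_image.1 hj
    obtain ⟨rfl, rfl⟩ := Prod.ext_iff.1 hk
    rfl
  · intro j hj
    obtain ⟨k, hk, hkq⟩ := Finset.mem_image.1 hj
    exact (Finset.mem_erase.1 hk).1 (congrArg Prod.fst hkq)
  · intro i hi
    induction hd : d i using Nat.strong_induction_on generalizing i with
    | _ n ih =>
      by_cases hiq : i = q
      · rw [hiq]
      · obtain ⟨hsS, -, hlt⟩ := hsucc i hi hiq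
        exact .head (mem_arc i hi hiq) (ih _ (hd ▸ hlt) _ hsS rfl)

variable [Fintype α] [DecidableEq α] {P : PotGraph α} {S : Finset α} {q : α}

lemma IsTreeOn.isUTreeOn_undir {T : Finset (α × α)} (h : IsTreeOn (barcs P) T S q) :
    IsUTreeOn P (undir T) S := by
  refine ⟨?_, ?_, ?_⟩
  · intro e he
    obtain ⟨⟨i, j⟩, hij, rfl⟩ := Finset.mem_image.1 he
    obtain ⟨hE, hne⟩ := Finset.mem_filter.1 (h.2.1 hij)
    exact ⟨i, j, hne, rfl, hE, h.2.2.1 _ hij⟩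
  · have : Std.Symm fun a b => s(a, b) ∈ undir T :=
      ⟨fun a b => by rw [Sym2.eq_swap]; exact id⟩
    have toRoot : ∀ i ∈ S, Relation.ReflTransGen (fun a b => s(a, b) ∈ undir T) i q :=
      fun i hi => .mono (fun a b hab => Finset.mem_image_of_mem _ hab) _ _ (h.2.2.2.2.2 i hi)
    exact fun i hi j hj => (toRoot i hi).trans (symm_of _ (toRoot j hj))
  · rw [undir, Finset.card_image_of_injOn h.injOn_sym2Mk]
    exact h.card_add_one

lemma IsTreeOn.uweight_undir {T : Finset (α × α)} (h : IsTreeOn (barcs P) T S q) :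
    uweight P (undir T) = aweight (bw P) T + ∑ i ∈ S.erase q, P.p i i := by
  rw [uweight, undir, Finset.sum_image h.injOn_sym2Mk, aweight, ← h.sum_fst fun i => P.p i i,
    ← Finset.sum_add_distrib]
  exact Finset.sum_congr rfl fun a _ => by simp [bw]

lemma IsUTreeOn.mem_edges {U : Finset (Sym2 α)} (hU : IsUTreeOn P U S) {i j : α}
    (hij : s(i, j) ∈ U) : i ≠ j ∧ (i, j) ∈ P.edges ∧ j ∈ S := by
  obtain ⟨i', j', hne, heq, hE, hiS, hjS⟩ := hU.1 _ hij
  rcases Sym2.eq_iff.1 heq with ⟨rfl, rfl⟩ | ⟨rfl, rfl⟩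
  · exact ⟨hne, hE, hjS⟩
  · exact ⟨hne.symm, P.symm_mem _ _ hE, hiS⟩

/-- Orient every edge towards `q`: each vertex points to a neighbour closer to `q`; the edge
count `|U| = |S| - 1` then forces the oriented edges to exhaust `U`. -/
lemma IsUTreeOn.exists_isTreeOn_undir_eq {U : Finset (Sym2 α)} (hU : IsUTreeOn P U S)
    (hq : q ∈ S) : ∃ T, IsTreeOn (barcs P) T S q ∧ undir T = U := by
  let G := SimpleGraph.fromEdgeSet (U : Set (Sym2 α))
  have adj_of_mem : ∀ i j, s(i, j) ∈ U → G.Adj i j := fun i j hij =>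
    (SimpleGraph.fromEdgeSet_adj _).2 ⟨hij, (hU.mem_edges hij).1⟩
  have succ_spec : ∀ i, ∃ j, i ∈ S → i ≠ q → G.Adj i j ∧ G.dist j q < G.dist i q := by
    intro i
    by_cases hi : i ∈ S ∧ i ≠ q
    · have hreach : G.Reachable i q := (SimpleGraph.reachable_iff_reflTransGen i q).2
        (.mono adj_of_mem _ _ (hU.2.1 i hi.1 q hq))
      obtain ⟨j, hj⟩ := hreach.exists_adj_dist_lt hi.2
      exact ⟨j, fun _ _ => hj⟩
    · exact ⟨i, fun h1 h2 => absurd ⟨h1, h2⟩ hi⟩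
  choose succ hsucc using succ_spec
  have hsuccU : ∀ i ∈ S, i ≠ q → s(i, succ i) ∈ U := fun i hi hiq =>
    ((SimpleGraph.fromEdgeSet_adj _).1 (hsucc i hi hiq).1).1
  have hT := isTreeOn_image_succ (E := barcs P) hq succ (G.dist · q) fun i hi hiq =>
    have ⟨hne, hE, hS⟩ := hU.mem_edges (hsuccU i hi hiq)
    ⟨hS, Finset.mem_filter.2 ⟨hE, hne⟩, (hsucc i hi hiq).2⟩
  refine ⟨_, hT, Finset.eq_of_subset_of_card_le ?_ ?_⟩
  · intro e he
    obtain ⟨a, ha, rfl⟩ := Finset.mem_image.1 he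
    obtain ⟨i, hi, rfl⟩ := Finset.mem_image.1 ha
    exact hsuccU i (Finset.mem_erase.1 hi).2 (Finset.mem_erase.1 hi).1
  · have hTcard := hT.isUTreeOn_undir.2.2
    have hUcard := hU.2.2
    omega

theorem statement9_general (P : PotGraph α) (S : Finset α) (q : α)
    (Tq : Finset (α × α)) (hTq : IsTreeOn (barcs P) Tq S q)
    (T : Finset (Sym2 α)) (hT : undir Tq = T) :
    (∀ T', IsTreeOn (barcs P) T' S q → aweight (bw P) Tq ≤ aweight (bw P) T') ↔
      (∀ U, IsUTreeOn P U S → uweight P T ≤ uweight P U) := by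
  subst hT
  constructor
  · intro hmin U hU
    obtain ⟨T', hT', rfl⟩ := hU.exists_isTreeOn_undir_eq hTq.1
    rw [hTq.uweight_undir, hT'.uweight_undir]
    linarith [hmin T' hT']
  · intro hmin T' hT'
    have := hmin _ hT'.isUTreeOn_undir
    rw [hTq.uweight_undir, hT'.uweight_undir] at this
    linarith

/-- Theorem 3.  `T_q ∈ 𝓣^{•q}_S` has minimum weight among entering
trees with vertex set `S` and root `q` iff the corresponding undirected tree `T` has
minimum weight among undirected trees that are subgraphs of `P` with vertex set `S`. -/
theorem statement9 (P : PotGraph α) (S : Finset α) (q : α) (hq : q ∈ S)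
    (Tq : Finset (α × α)) (hTq : IsTreeOn (barcs P) Tq S q)
    (T : Finset (Sym2 α)) (hT : undir Tq = T) :
    (∀ T', IsTreeOn (barcs P) T' S q → aweight (bw P) Tq ≤ aweight (bw P) T') ↔
      (∀ U, IsUTreeOn P U S → uweight P T ≤ uweight P U) :=
  statement9_general P S q Tq hTq T hT

end BarrierForests
end

section
/- Let P be a potential graph with barrier digraph V, let {q, q'} ⊆ S ⊆ N, and suppose T_S ≠ ∅ (there exists an undirected tree subgraph of P with vertex set S). Then λ^{•q}_S − p_{qq} = λ^{•q'}_S − p_{q'q'}. -/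
open scoped Classical

namespace BarrierForests

variable {α : Type*} [Fintype α] [DecidableEq α]

/-!
Reversing the arc `(x, q)` into the root `q` of an entering tree gives an entering tree rooted
at `x`, and since `v i j = p i j - p i i` with `p` symmetric, its weight changes by
`p x x - p q q`. Thus `Υ^T - p r r` (for `T` rooted at `r`) is invariant under reversing,
one arc at a time, the path from `q'` to `q`; this matches the trees rooted at `q` with those
rooted at `q'`, and the two minima agree.
-/

lemma minW_sub_coe {β : Type*} (s : Set β) (w : β → ℝ) (c : ℝ) :
    minW s w - (c : EReal) = minW s (fun x => w x - c) := by
  unfold minW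
  apply le_antisymm
  · refine le_sInf ?_
    rintro _ ⟨x, hx, rfl⟩
    exact EReal.sub_le_sub (sInf_le (Set.mem_image_of_mem _ hx)) le_rfl
  · rw [EReal.le_sub_iff_add_le (Or.inl (EReal.coe_ne_bot c)) (Or.inl (EReal.coe_ne_top c))]
    refine le_sInf ?_
    rintro _ ⟨x, hx, rfl⟩
    calc sInf ((fun x => ((w x - c : ℝ) : EReal)) '' s) + c
        ≤ ((w x - c : ℝ) : EReal) + c := add_le_add_left (sInf_le (Set.mem_image_of_mem _ hx)) _
      _ = w x := by rw [← EReal.coe_add, sub_add_cancel]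

lemma minW_congr {β γ : Type*} {s : Set β} {t : Set γ} {w : β → ℝ} {w' : γ → ℝ}
    (hst : ∀ x ∈ s, ∃ y ∈ t, w' y = w x) (hts : ∀ y ∈ t, ∃ x ∈ s, w x = w' y) :
    minW s w = minW t w' := by
  unfold minW
  congr 1
  ext a
  constructor
  · rintro ⟨x, hx, rfl⟩
    obtain ⟨y, hy, hyx⟩ := hst x hx
    exact ⟨y, hy, congrArg _ hyx⟩
  · rintro ⟨y, hy, rfl⟩
    obtain ⟨x, hx, hxy⟩ := hts y hy
    exact ⟨x, hx, congrArg _ hxy⟩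

lemma mem_barcs_swap {P : PotGraph α} {i j : α} (h : (i, j) ∈ barcs P) : (j, i) ∈ barcs P := by
  simp only [barcs, Finset.mem_filter] at h ⊢
  exact ⟨P.symm_mem i j h.1, Ne.symm h.2⟩

lemma aweight_insert_erase {β : Type*} [DecidableEq β] (v : β → β → ℝ) {T : Finset (β × β)}
    {q x : β} (hx : (x, q) ∈ T) (hqx : (q, x) ∉ T) :
    aweight v (insert (q, x) (T.erase (x, q))) = aweight v T - v x q + v q x := by
  unfold aweight
  rw [Finset.sum_insert (fun h => hqx (Finset.mem_of_mem_erase h)), Finset.sum_erase_eq_sub hx]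
  ring

lemma reflTransGen_erase_or {β : Type*} [DecidableEq β] {T : Finset (β × β)} {x q i : β}
    (h : Relation.ReflTransGen (arcRel T) i q) :
    Relation.ReflTransGen (arcRel (T.erase (x, q))) i x ∨
      Relation.ReflTransGen (arcRel (T.erase (x, q))) i q := by
  induction h using Relation.ReflTransGen.head_induction_on with
  | refl => exact Or.inr .refl
  | @head a c hac _ ih =>
    by_cases hax : (a, c) = (x, q)
    · exact Or.inl ((Prod.mk.inj hax).1 ▸ .refl)
    · have harc : (a, c) ∈ T.erase (x, q) := Finset.mem_erase.mpr ⟨hax, hac⟩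
      exact ih.imp (.head harc) (.head harc)

lemma IsTreeOn.reverse_arc_into_root {β : Type*} [DecidableEq β] {E T : Finset (β × β)}
    {S : Finset β} {q x : β} (h : IsTreeOn E T S q) (hx : (x, q) ∈ T) (hqx : (q, x) ∈ E) :
    IsTreeOn E (insert (q, x) (T.erase (x, q))) S x := by
  obtain ⟨hqS, hTE, hTS, huniq, hroot, hreach⟩ := h
  have hxq : x ≠ q := fun h => hroot x (h ▸ hx)
  refine ⟨(hTS _ hx).1, ?_, ?_, ?_, ?_, ?_⟩
  · exact Finset.insert_subset hqx ((Finset.erase_subset _ _).trans hTE)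
  · simp only [Finset.forall_mem_insert]
    exact ⟨⟨hqS, (hTS _ hx).1⟩, fun a ha => hTS a (Finset.mem_of_mem_erase ha)⟩
  · intro i hiS hix
    by_cases hiq : i = q
    · subst hiq
      refine ⟨x, Finset.mem_insert_self _ _, fun j hj => ?_⟩
      rcases Finset.mem_insert.mp hj with hj | hj
      · exact (Prod.mk.inj hj).2
      · exact absurd (Finset.mem_of_mem_erase hj) (hroot j)
    · obtain ⟨j, hj, hjuniq⟩ := huniq i hiS hiq
      have hne : (i, j) ≠ (x, q) := fun he => hix (Prod.mk.inj he).1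
      refine ⟨j, Finset.mem_insert_of_mem (Finset.mem_erase.mpr ⟨hne, hj⟩), fun j' hj' => ?_⟩
      rcases Finset.mem_insert.mp hj' with hj' | hj'
      · exact absurd (Prod.mk.inj hj').1 hiq
      · exact hjuniq j' (Finset.mem_of_mem_erase hj')
  · intro j hj
    rcases Finset.mem_insert.mp hj with hj | hj
    · exact hxq (Prod.mk.inj hj).1
    · obtain ⟨hjq, hj⟩ := Finset.mem_erase.mp hj
      exact hjq (by rw [(huniq x (hTS _ hx).1 hxq).unique hj hx])
  · intro i hiS
    have hlift := @Relation.ReflTransGen.mono _ (arcRel (T.erase (x, q)))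
      (arcRel (insert (q, x) (T.erase (x, q)))) (fun _ _ hab => Finset.mem_insert_of_mem hab)
    rcases reflTransGen_erase_or (hreach i hiS) with h | h
    · exact hlift _ _ h
    · exact (hlift _ _ h).tail (Finset.mem_insert_self _ _)

lemma isChain_swap_arcRel_erase {β : Type*} [DecidableEq β] {T : Finset (β × β)} {q y : β}
    (hroot : ∀ j, (q, j) ∉ T) :
    ∀ {x : β} (l : List β), x ≠ q → List.IsChain (Function.swap (arcRel T)) (x :: l) →
      List.IsChain (Function.swap (arcRel (T.erase (y, q)))) (x :: l)
  | _, [], _, _ => .singleton _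
  | x, b :: l, hxq, h => by
    rw [List.isChain_cons_cons] at h ⊢
    exact ⟨Finset.mem_erase.mpr ⟨fun he => hxq (Prod.mk.inj he).2, h.1⟩,
      isChain_swap_arcRel_erase hroot l (fun hb => hroot x (hb ▸ h.1)) h.2⟩

lemma IsTreeOn.reroot_along {P : PotGraph α} {S : Finset α} :
    ∀ (l : List α) {T : Finset (α × α)} {q : α}, IsTreeOn (barcs P) T S q →
      List.IsChain (Function.swap (arcRel T)) (q :: l) →
      ∃ T', IsTreeOn (barcs P) T' S ((q :: l).getLast (List.cons_ne_nil _ _)) ∧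
        aweight (bw P) T' - P.p ((q :: l).getLast (List.cons_ne_nil _ _))
          ((q :: l).getLast (List.cons_ne_nil _ _)) = aweight (bw P) T - P.p q q
  | [], T, _, hT, _ => ⟨T, hT, rfl⟩
  | x :: l, T, q, hT, hchain => by
    rw [List.isChain_cons_cons] at hchain
    obtain ⟨hxqT, hchain⟩ := hchain
    have hroot : ∀ j, (q, j) ∉ T := hT.2.2.2.2.1
    have hxq : x ≠ q := fun h => hroot x (h ▸ hxqT)
    have hT' := hT.reverse_arc_into_root hxqT (mem_barcs_swap (hT.2.1 hxqT))
    have hchain' :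
        List.IsChain (Function.swap (arcRel (insert (q, x) (T.erase (x, q))))) (x :: l) :=
      (isChain_swap_arcRel_erase hroot l hxq hchain).imp fun _ _ h => Finset.mem_insert_of_mem h
    obtain ⟨T', hT'', hw⟩ := reroot_along l hT' hchain'
    rw [List.getLast_cons_cons]
    refine ⟨T', hT'', ?_⟩
    rw [hw, aweight_insert_erase _ hxqT (hroot x)]
    simp only [bw, P.symm_w x q]
    ring

lemma IsTreeOn.reroot {P : PotGraph α} {S : Finset α} {T : Finset (α × α)} {q q' : α}
    (hT : IsTreeOn (barcs P) T S q) (hq' : q' ∈ S) :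
    ∃ T', IsTreeOn (barcs P) T' S q' ∧
      aweight (bw P) T' - P.p q' q' = aweight (bw P) T - P.p q q := by
  obtain ⟨l, hchain, hlast⟩ :=
    List.exists_isChain_cons_of_relationReflTransGen (hT.2.2.2.2.2 q' hq').swap
  exact hlast ▸ hT.reroot_along l hchain

theorem statement11_general (P : PotGraph α) (S : Finset α)
    (q q' : α) (hq : q ∈ S) (hq' : q' ∈ S) :
    lamB (bw P) (barcs P) S q - ((P.p q q : ℝ) : EReal) =
      lamB (bw P) (barcs P) S q' - ((P.p q' q' : ℝ) : EReal) := by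
  rw [lamB, lamB, minW_sub_coe, minW_sub_coe]
  exact minW_congr (fun _ hT => hT.reroot hq') (fun _ hT => hT.reroot hq)

/-- Assertion 4.  If `{q, q'} ⊆ S` and `𝓣_S ≠ ∅`, then
`λ^{•q}_S - p q q = λ^{•q'}_S - p q' q'` for the barrier digraph of `P`. -/
theorem statement11 (P : PotGraph α) (S : Finset α)
    (q q' : α) (hq : q ∈ S) (hq' : q' ∈ S)
    (hne : ∃ T, IsUTreeOn P T S) :
    lamB (bw P) (barcs P) S q - ((P.p q q : ℝ) : EReal) =
      lamB (bw P) (barcs P) S q' - ((P.p q' q' : ℝ) : EReal) :=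
  statement11_general P S q q' hq hq'

end BarrierForests
end
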